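/- arXiv:math/9902088 — 3 statements merged into one kernel-verified Lean document; each statement's English description precedes it below -/
import Mathlib

section
/- Let λ be an m-partition of r, n a removable node of λ, j_n the entry at n in t_λ, and i_n defined by (i_n)·w_λ = j_n where w_λ is defined by t^λ w_λ = t_λ. Then w_λ = s_{i_n, r} · w_{λ_n} · s_{r, j_n}, where λ_n is the m-partition obtained by removing n and w_{λ_n} is its associated permutation. -/
noncomputable section
open scoped Classical
open Finset

def pApp {r : ℕ} (w : Equiv.Perm (Fin r)) (x : ℕ) : ℕ :=
  if h : x < r then (w ⟨x, h⟩ : ℕ) else x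

def blockOf (c : List ℕ) (x : ℕ) : ℕ :=
  ((Finset.range c.length).filter (fun i => (c.take (i + 1)).sum ≤ x)).card

def inYoung {r : ℕ} (c : List ℕ) (w : Equiv.Perm (Fin r)) : Prop :=
  ∀ x : Fin r, blockOf c (pApp w (x : ℕ)) = blockOf c (x : ℕ)

def conjP (l : List ℕ) : List ℕ :=
  (List.range (l.foldr max 0)).map (fun i => l.countP (fun p => decide (i < p)))

def IsPartition (l : List ℕ) : Prop :=
  l.Pairwise (· ≥ ·) ∧ ∀ p ∈ l, 0 < p

/-- The `i`-th part (0-indexed row `i` of component `k`) of a multipartition. -/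
def part (L : List (List ℕ)) (k i : ℕ) : ℕ := (L.getD k []).getD i 0

/-- `(k,i,j)` (all 0-indexed) is a node of the Young diagram of the
multipartition `L`. -/
def mpMem (L : List (List ℕ)) (p : ℕ × ℕ × ℕ) : Prop :=
  p.2.2 < part L p.1 p.2.1

/-- The Finset of nodes of the Young diagram of `L`. -/
def mpNodes (L : List (List ℕ)) : Finset (ℕ × ℕ × ℕ) :=
  (Finset.range L.length ×ˢ
      Finset.range (L.flatten.sum + L.flatten.length + 1) ×ˢ
      Finset.range (L.flatten.sum + L.flatten.length + 1)).filter (fun p => mpMem L p)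

/-- Row-reading order on nodes: components in order, rows top to bottom,
within a row left to right. -/
def rowLt (p q : ℕ × ℕ × ℕ) : Prop :=
  p.1 < q.1 ∨ (p.1 = q.1 ∧ (p.2.1 < q.2.1 ∨ (p.2.1 = q.2.1 ∧ p.2.2 < q.2.2)))

/-- Column-reading order on nodes: components in reverse order, columns left to
right, within a column top to bottom. -/
def colLt (p q : ℕ × ℕ × ℕ) : Prop :=
  q.1 < p.1 ∨ (p.1 = q.1 ∧ (p.2.2 < q.2.2 ∨ (p.2.2 = q.2.2 ∧ p.2.1 < q.2.1)))

/-- The (0-indexed) entry at node `p` of the row-filled tableau `t^λ`. -/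
def rowRank (L : List (List ℕ)) (p : ℕ × ℕ × ℕ) : ℕ :=
  ((mpNodes L).filter (fun q => rowLt q p)).card

/-- The (0-indexed) entry at node `p` of the column-filled tableau `t_λ`. -/
def colRank (L : List (List ℕ)) (p : ℕ × ℕ × ℕ) : ℕ :=
  ((mpNodes L).filter (fun q => colLt q p)).card

/-- `w` is the permutation `w_λ` defined by `t^λ w_λ = t_λ`. -/
def wprop {r : ℕ} (L : List (List ℕ)) (w : Equiv.Perm (Fin r)) : Prop :=
  ∀ p ∈ mpNodes L, pApp w (rowRank L p) = colRank L p

/-- The concatenation `λ̄'` of the dual multipartition `λ' = (λ^(m)′,…,λ^(1)′)`. -/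
def dualConcat (L : List (List ℕ)) : List ℕ := (L.reverse.map conjP).flatten


/-- `(k,i,j)` is a removable node of the multipartition `L`. -/
def isRemovableNode (L : List (List ℕ)) (p : ℕ × ℕ × ℕ) : Prop :=
  p.2.2 + 1 = part L p.1 p.2.1 ∧ part L p.1 (p.2.1 + 1) < part L p.1 p.2.1

/-- The multipartition obtained from `L` by removing the removable node `p`. -/
def removeNode (L : List (List ℕ)) (p : ℕ × ℕ × ℕ) : List (List ℕ) :=
  L.set p.1 ((L.getD p.1 []).set p.2.1 (part L p.1 p.2.1 - 1))

/-- `s` is the cycle `s_{a,b}` (0-indexed) of `Fin r`, sending `a` to `b`,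
`x` to `x-1` for `a < x ≤ b`, and fixing everything else. -/
def IsCyc {r : ℕ} (s : Equiv.Perm (Fin r)) (a b : ℕ) : Prop :=
  a ≤ b ∧ b < r ∧ pApp s a = b ∧
    (∀ x, a < x → x ≤ b → pApp s x = x - 1) ∧
    (∀ x, x < a ∨ b < x → pApp s x = x)

/-!
Removing the removable node `n` deletes the entry `i_n` from `t^λ` and `j_n` from `t_λ`, while
every other node keeps its place in both reading orders; so its entries in `t^{λ_n}`, `t_{λ_n}`
are those in `t^λ`, `t_λ` with the gap at `i_n`, resp. `j_n`, closed up, which is what the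
cycles `s_{i_n,r}` and `s_{j_n,r}` do. Hence `s_{i_n,r} w_{λ_n} s_{r,j_n}` sends the entry of
every node in `t^λ` to its entry in `t_λ` (for `n` itself through `r`, which `w_{λ_n}` fixes),
exactly as `w_λ` does; as the entries of `t^λ` exhaust `{1, …, r}`, the two permutations agree.
-/

section PermApply

variable {r : ℕ}

lemma pApp_lt (w : Equiv.Perm (Fin r)) {x : ℕ} (hx : x < r) : pApp w x < r := by
  simp only [pApp, dif_pos hx, Fin.is_lt]

lemma pApp_mul (f g : Equiv.Perm (Fin r)) {x : ℕ} (hx : x < r) :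
    pApp (f * g) x = pApp f (pApp g x) := by
  simp [pApp, hx, Equiv.Perm.mul_apply]

lemma pApp_inv_of_pApp_eq (w : Equiv.Perm (Fin r)) {x y : ℕ} (hx : x < r)
    (h : pApp w x = y) : pApp w⁻¹ y = x := by
  have hy : y < r := h ▸ pApp_lt w hx
  have hwx : w ⟨x, hx⟩ = ⟨y, hy⟩ := Fin.ext (by simpa [pApp, hx] using h)
  simp [pApp, hy, ← hwx]

lemma Equiv.Perm.ext_pApp {w w' : Equiv.Perm (Fin r)} (h : ∀ x < r, pApp w x = pApp w' x) :
    w = w' :=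
  Equiv.ext fun x => Fin.ext (by simpa [pApp, x.is_lt] using h x x.is_lt)

end PermApply

section RankIn

variable {α : Type*} (lt : α → α → Prop)

def rankIn (s : Finset α) (p : α) : ℕ := #(s.filter (lt · p))

variable {lt} {s : Finset α} {a p q : α}

lemma rankIn_lt_rankIn [IsTrans α lt] [Std.Irrefl lt] (hp : p ∈ s) (h : lt p q) :
    rankIn lt s p < rankIn lt s q := by
  refine Finset.card_lt_card ⟨fun x hx => ?_, fun hsub => ?_⟩
  · rw [Finset.mem_filter] at hx ⊢
    exact ⟨hx.1, _root_.trans hx.2 h⟩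
  · exact irrefl p (Finset.mem_filter.1 (hsub (Finset.mem_filter.2 ⟨hp, h⟩))).2

lemma rankIn_lt_card [Std.Irrefl lt] (hp : p ∈ s) : rankIn lt s p < #s :=
  Finset.card_lt_card ⟨Finset.filter_subset _ _,
    fun hsub => irrefl p (Finset.mem_filter.1 (hsub hp)).2⟩

lemma injOn_rankIn [IsStrictTotalOrder α lt] : Set.InjOn (rankIn lt s) s := by
  intro p hp q hq hpq
  rcases trichotomous (r := lt) p q with h | h | h
  · exact absurd hpq (rankIn_lt_rankIn hp h).ne
  · exact h
  · exact absurd hpq (rankIn_lt_rankIn hq h).ne'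

lemma image_rankIn [IsStrictTotalOrder α lt] : s.image (rankIn lt s) = range #s :=
  Finset.eq_of_subset_of_card_le
    (Finset.image_subset_iff.2 fun _ hp => Finset.mem_range.2 (rankIn_lt_card hp))
    (by rw [Finset.card_range, Finset.card_image_of_injOn injOn_rankIn])

lemma rankIn_eq_rankIn_erase_add [DecidableEq α] (ha : a ∈ s) (p : α) :
    rankIn lt s p = rankIn lt (s.erase a) p + if lt a p then 1 else 0 := by
  conv_lhs => rw [rankIn, ← Finset.insert_erase ha, Finset.filter_insert]
  split_ifs
  · exact Finset.card_insert_of_notMem fun h =>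
      Finset.notMem_erase a s (Finset.mem_of_mem_filter a h)
  · rfl

lemma IsCyc.pApp_rankIn [IsStrictTotalOrder α lt] [DecidableEq α] {r : ℕ}
    {σ : Equiv.Perm (Fin r)} (hσ : IsCyc σ (rankIn lt s a) (r - 1)) (hs : #s ≤ r)
    (ha : a ∈ s) (hp : p ∈ s) (hpa : p ≠ a) :
    pApp σ (rankIn lt s p) = rankIn lt (s.erase a) p := by
  have hpr : rankIn lt s p < r := (rankIn_lt_card hp).trans_le hs
  have hsplit := rankIn_eq_rankIn_erase_add (lt := lt) ha p
  rcases trichotomous (r := lt) a p with h | h | h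
  · have := rankIn_lt_rankIn ha h
    rw [if_pos h] at hsplit
    rw [hσ.2.2.2.1 _ (by omega) (by omega)]
    omega
  · exact absurd h.symm hpa
  · have := rankIn_lt_rankIn hp h
    rw [if_neg (asymm h)] at hsplit
    rw [hσ.2.2.2.2 _ (Or.inl this)]
    omega

end RankIn

section Nodes

instance : IsStrictTotalOrder (ℕ × ℕ × ℕ) rowLt where
  trichotomous p q := by
    rcases p with ⟨_, _, _⟩; rcases q with ⟨_, _, _⟩; simp [rowLt]; omega
  irrefl p := by simp [rowLt]
  trans p q s := by simp only [rowLt]; omega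

instance : IsStrictTotalOrder (ℕ × ℕ × ℕ) colLt where
  trichotomous p q := by
    rcases p with ⟨_, _, _⟩; rcases q with ⟨_, _, _⟩; simp [colLt]; omega
  irrefl p := by simp [colLt]
  trans p q s := by simp only [colLt]; omega

variable {L : List (List ℕ)} {n : ℕ × ℕ × ℕ}

lemma rowRank_eq_rankIn : rowRank L = rankIn rowLt (mpNodes L) := rfl

lemma colRank_eq_rankIn : colRank L = rankIn colLt (mpNodes L) := rfl

lemma lt_length_of_part_pos {k i : ℕ} (h : 0 < part L k i) :
    k < L.length ∧ i < (L.getD k []).length := by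
  by_contra hc
  rw [not_and_or, not_lt, not_lt] at hc
  rcases hc with hk | hi
  · rw [part, List.getD_eq_default _ _ hk] at h; simp at h
  · rw [part, List.getD_eq_default _ _ hi] at h; simp at h

lemma getD_mem_of_lt_length {k : ℕ} (hk : k < L.length) : L.getD k [] ∈ L := by
  rw [List.getD_eq_getElem _ _ hk]; exact List.getElem_mem hk

lemma part_le_sum_flatten (k i : ℕ) : part L k i ≤ L.flatten.sum := by
  rcases Nat.eq_zero_or_pos (part L k i) with h | h
  · omega
  obtain ⟨hk, hi⟩ := lt_length_of_part_pos h
  refine List.le_sum_of_mem (List.mem_flatten.2 ⟨_, getD_mem_of_lt_length hk, ?_⟩)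
  rw [part, List.getD_eq_getElem _ _ hi]
  exact List.getElem_mem hi

lemma length_getD_le_length_flatten (k : ℕ) : (L.getD k []).length ≤ L.flatten.length := by
  rcases lt_or_ge k L.length with hk | hk
  · rw [List.length_flatten]
    exact List.le_sum_of_mem (List.mem_map_of_mem (getD_mem_of_lt_length hk))
  · rw [List.getD_eq_default _ _ hk]; simp

lemma mem_mpNodes {p : ℕ × ℕ × ℕ} : p ∈ mpNodes L ↔ mpMem L p := by
  refine ⟨fun h => (Finset.mem_filter.1 h).2, fun h => Finset.mem_filter.2 ⟨?_, h⟩⟩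
  obtain ⟨hk, hi⟩ := lt_length_of_part_pos (Nat.zero_lt_of_lt h)
  have := part_le_sum_flatten (L := L) p.1 p.2.1
  have := length_getD_le_length_flatten (L := L) p.1
  simp only [mpMem, Finset.mem_product, Finset.mem_range] at h ⊢
  omega

lemma sum_range_getD_eq_sum (c : List ℕ) {N : ℕ} (h : c.length ≤ N) :
    ∑ i ∈ range N, c.getD i 0 = c.sum := by
  induction c generalizing N with
  | nil => simp
  | cons a t ih =>
    obtain ⟨M, rfl⟩ : ∃ M, N = M + 1 := ⟨N - 1, by simp at h; omega⟩
    rw [Finset.sum_range_succ', List.sum_cons, add_comm]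
    simpa using ih (N := M) (by simpa using h)

lemma sum_range_ite_lt {m N : ℕ} (h : m ≤ N) :
    ∑ j ∈ range N, (if j < m then 1 else 0) = m := by
  rw [Finset.sum_boole, show (range N).filter (· < m) = range m by ext; simp; omega,
    Finset.card_range, Nat.cast_id]

lemma card_mpNodes (L : List (List ℕ)) : #(mpNodes L) = L.flatten.sum := by
  rw [mpNodes, Finset.card_filter]
  set N := L.flatten.sum + L.flatten.length + 1
  calc _ = ∑ k ∈ range L.length, ∑ i ∈ range N, ∑ j ∈ range N,
          (if mpMem L (k, i, j) then 1 else 0) := by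
        simp only [Finset.sum_product]
    _ = ∑ k ∈ range L.length, ∑ i ∈ range N, (L.getD k []).getD i 0 := by
        refine Finset.sum_congr rfl fun k _ => Finset.sum_congr rfl fun i _ => ?_
        have := part_le_sum_flatten (L := L) k i
        convert sum_range_ite_lt (m := part L k i) (N := N) (by omega) <;> rfl
    _ = ∑ k ∈ range L.length, (L.map List.sum).getD k 0 := by
        refine Finset.sum_congr rfl fun k _ => ?_
        have := length_getD_le_length_flatten (L := L) k
        rw [sum_range_getD_eq_sum _ (by omega)]
        simpa using (List.getD_map (l := L) (d := []) (n := k) List.sum).symm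
    _ = L.flatten.sum := by
        rw [sum_range_getD_eq_sum _ (by simp), List.sum_flatten]

lemma mpMem_of_isRemovableNode (hn : isRemovableNode L n) : mpMem L n := by
  unfold mpMem; have := hn.1; omega

lemma part_removeNode (hn : isRemovableNode L n) (k i : ℕ) :
    part (removeNode L n) k i = if k = n.1 ∧ i = n.2.1 then part L k i - 1 else part L k i := by
  obtain ⟨hk, hi⟩ := lt_length_of_part_pos (Nat.zero_lt_of_lt (mpMem_of_isRemovableNode hn))
  simp only [part, removeNode, List.getD_eq_getElem?_getD] at hi ⊢
  rw [List.getElem?_set]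
  by_cases h1 : n.1 = k
  · subst h1
    simp only [↓reduceIte, hk, Option.getD_some, List.getElem?_set]
    by_cases h2 : n.2.1 = i
    · subst h2; simp [hi]
    · simp [h2, Ne.symm h2]
  · simp [h1, Ne.symm h1]

lemma mpNodes_removeNode (hn : isRemovableNode L n) :
    mpNodes (removeNode L n) = (mpNodes L).erase n := by
  ext ⟨k, i, j⟩
  have hlast := hn.1
  rw [Finset.mem_erase, mem_mpNodes, mem_mpNodes]
  simp only [mpMem, part_removeNode hn]
  by_cases hc : k = n.1 ∧ i = n.2.1
  · obtain ⟨rfl, rfl⟩ := hc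
    have : (n.1, n.2.1, j) = n ↔ j = n.2.2 := by rcases n with ⟨_, _, _⟩; simp
    rw [if_pos ⟨rfl, rfl⟩, ne_eq, this]
    omega
  · rw [if_neg hc]
    exact ⟨fun h => ⟨by rintro rfl; exact hc ⟨rfl, rfl⟩, h⟩, And.right⟩

end Nodes

section PermOfMultipartition

variable {r : ℕ} {L : List (List ℕ)}

lemma eq_of_wprop (hr : L.flatten.sum = r) {w w' : Equiv.Perm (Fin r)} (hw : wprop L w)
    (hw' : wprop L w') : w = w' := by
  refine Equiv.Perm.ext_pApp fun x hx => ?_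
  obtain ⟨p, hp, rfl⟩ : ∃ p ∈ mpNodes L, rowRank L p = x := by
    rw [← Finset.mem_image, rowRank_eq_rankIn, image_rankIn, card_mpNodes, hr]
    exact Finset.mem_range.2 hx
  rw [hw p hp, hw' p hp]

lemma wprop_of_removeNode {n : ℕ × ℕ × ℕ} (hn : isRemovableNode L n)
    (hr : L.flatten.sum = r) {wν s1 s2 : Equiv.Perm (Fin r)}
    (hwv : wprop (removeNode L n) wν) (hfix : pApp wν (r - 1) = r - 1)
    (hs1 : IsCyc s1 (rowRank L n) (r - 1)) (hs2 : IsCyc s2 (colRank L n) (r - 1)) :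
    wprop L (s2⁻¹ * wν * s1) := by
  intro p hp
  have hcard : #(mpNodes L) = r := (card_mpNodes L).trans hr
  have hnL : n ∈ mpNodes L := mem_mpNodes.2 (mpMem_of_isRemovableNode hn)
  have hrow : rowRank L p < r := hcard ▸ rankIn_lt_card hp
  have hcol : colRank L p < r := hcard ▸ rankIn_lt_card hp
  rw [pApp_mul _ _ hrow, pApp_mul _ _ (pApp_lt _ hrow)]
  refine pApp_inv_of_pApp_eq s2 hcol ?_
  rcases eq_or_ne p n with rfl | hpn
  · rw [hs1.2.2.1, hfix, hs2.2.2.1]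
  · have hpν : p ∈ mpNodes (removeNode L n) := by
      rw [mpNodes_removeNode hn]; exact Finset.mem_erase.2 ⟨hpn, hp⟩
    have hs1p : pApp s1 (rowRank L p) = rowRank (removeNode L n) p := by
      rw [rowRank_eq_rankIn, rowRank_eq_rankIn, mpNodes_removeNode hn]
      exact hs1.pApp_rankIn hcard.le hnL hp hpn
    have hs2p : pApp s2 (colRank L p) = colRank (removeNode L n) p := by
      rw [colRank_eq_rankIn, colRank_eq_rankIn, mpNodes_removeNode hn]
      exact hs2.pApp_rankIn hcard.le hnL hp hpn
    rw [hs1p, hwv p hpν, hs2p]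

end PermOfMultipartition

/-- The paper's right-action product `s_{i_n,r} · w_{λ_n} · s_{r,j_n}` is the left-action
product `s2⁻¹ * wν * s1`, where `i_n = rowRank L n` and `j_n = colRank L n` are 0-indexed, so
that the paper's `r` becomes `r - 1`. -/
theorem stmt6_general (r : ℕ) (L : List (List ℕ))
    (hr : L.flatten.sum = r)
    (n : ℕ × ℕ × ℕ) (hn : isRemovableNode L n)
    (w wν : Equiv.Perm (Fin r))
    (hw : wprop L w) (hwv : wprop (removeNode L n) wν)
    (hfix : pApp wν (r - 1) = r - 1)
    (s1 s2 : Equiv.Perm (Fin r))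
    (hs1 : IsCyc s1 (rowRank L n) (r - 1))
    (hs2 : IsCyc s2 (colRank L n) (r - 1)) :
    w = s2⁻¹ * wν * s1 :=
  eq_of_wprop hr hw (wprop_of_removeNode hn hr hwv hfix hs1 hs2)

/-- (3.3b): `w_λ = s_{i_n,r} · w_{λ_n} · s_{r,j_n}` (products in
the paper's right-action convention; for Lean's left-acting permutations the
right-hand word `apply s_{i_n,r}, then w_{λ_n}, then s_{r,j_n} = s_{j_n,r}⁻¹`
is `s2⁻¹ * wν * s1`).  Here `i_n = rowRank L n` and `j_n = colRank L n`
(0-indexed entries of `n` in `t^λ` resp. `t_λ`). -/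
theorem stmt6 (r : ℕ) (L : List (List ℕ))
    (hL : ∀ l ∈ L, IsPartition l) (hr : L.flatten.sum = r)
    (n : ℕ × ℕ × ℕ) (hn : isRemovableNode L n)
    (w wν : Equiv.Perm (Fin r))
    (hw : wprop L w) (hwv : wprop (removeNode L n) wν)
    (hfix : pApp wν (r - 1) = r - 1)
    (s1 s2 : Equiv.Perm (Fin r))
    (hs1 : IsCyc s1 (rowRank L n) (r - 1))
    (hs2 : IsCyc s2 (colRank L n) (r - 1)) :
    w = s2⁻¹ * wν * s1 :=
  stmt6_general r L hr n hn w wν hw hwv hfix s1 s2 hs1 hs2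
end
end

section
/- Over a commutative ring R, in the Hecke algebra H of S_r, let λ be a partition of r and set x_λ = Σ_{w ∈ S_λ} T_w, y_{λ'} = Σ_{w ∈ S_{λ'}} (-q)^{-l(w)} T_w (assuming q invertible). Then the R-submodule x_λ H y_{λ'} is free of rank 1, generated by z_λ = x_λ T_{w_λ} y_{λ'}, where w_λ is the unique element of D_{λ λ'} with S_λ^{w_λ} ∩ S_{λ'} = {1}. -/
noncomputable section
open scoped Classical
open Finset

/-- The number of inversions, i.e. the Coxeter length, of a permutation of `Fin r`. -/
def permLen {r : ℕ} (w : Equiv.Perm (Fin r)) : ℕ :=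
  ((Finset.univ : Finset (Fin r × Fin r)).filter
    (fun p => p.1 < p.2 ∧ w p.2 < w p.1)).card

/-- `w` has minimal length in its double coset `S_c w S_d`
(products are written so that `a · w · b` with the paper's right-action
convention corresponds to `b * w * a` for Lean's left-acting permutations). -/
def IsDistinguished {r : ℕ} (c d : List ℕ) (w : Equiv.Perm (Fin r)) : Prop :=
  ∀ a b : Equiv.Perm (Fin r), inYoung c a → inYoung d b →
    permLen w ≤ permLen (b * w * a)

/-- `x_c = Σ_{w ∈ S_c} T_w`. -/
def xEl {r : ℕ} {H : Type} [AddCommMonoid H] (T : Equiv.Perm (Fin r) → H)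
    (c : List ℕ) : H :=
  ∑ w ∈ Finset.univ.filter (fun w => inYoung c w), T w

/-- `y_c = Σ_{w ∈ S_c} (-q)^{-ℓ(w)} T_w`. -/
def yEl {r : ℕ} {R : Type} [CommRing R] {H : Type} [AddCommMonoid H] [Module R H]
    (q : Rˣ) (T : Equiv.Perm (Fin r) → H) (c : List ℕ) : H :=
  ∑ w ∈ Finset.univ.filter (fun w => inYoung c w),
    ((((-q)⁻¹ : Rˣ) : R) ^ permLen w) • T w

/-!
Rows and columns of the Young diagram of `λ` are the blocks of `λ` and of `λ'`. Since
`x_λ T_s = q x_λ` for an adjacent transposition `s` inside a row and `T_s y_{λ'} = -y_{λ'}` for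
one inside a column, induction on the length reduces `x_λ T_w y_{λ'}` to the case where `w` is
increasing on every row and `w⁻¹` is increasing on every column. If such a `w` sends two boxes of
a row into one column, it even sends two adjacent boxes of a row to adjacent boxes `t` of a
column, and the factorisation `y_{λ'} = (1 - q⁻¹ T_t) y'` kills `x_λ T_w y_{λ'}`. Otherwise each
row is spread over distinct columns, in increasing order; then the column of the `k`-th box of a
row is at least `k`, and as both quantities have the same sum over the diagram, the `k`-th box
goes to the `k`-th column. Together with the monotonicity of `w⁻¹` on columns this pins `w` down,
so `w = w_λ`.

For freeness, `T_a T_{w_λ} T_b = T_{b w_λ a}` for `a ∈ S_λ`, `b ∈ S_{λ'}` by additivity of lengths,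
and `b w_λ a = w_λ` only for `a = b = 1`, so `T_{w_λ}` occurs in `z_λ` with coefficient `1`.
-/

def StrictMonoOnFibers {α β γ : Type*} [Preorder α] [Preorder γ] (g : α → β) (f : α → γ) :
    Prop :=
  ∀ ⦃x y⦄, x < y → g x = g y → f x < f y

namespace StrictMonoOnFibers

variable {α β γ δ : Type*} [PartialOrder α] [PartialOrder γ] [PartialOrder δ] {g : α → β}
  {f : α → γ}

lemma le_of_le (hf : StrictMonoOnFibers g f) {x y : α} (hxy : x ≤ y) (hg : g x = g y) :
    f x ≤ f y := by
  rcases hxy.lt_or_eq with h | rfl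
  · exact (hf h hg).le
  · exact le_rfl

lemma comp_of_injOn_fibers (hf : StrictMonoOnFibers g f) {h : γ → δ} (hh : Monotone h)
    (hinj : ∀ x y, g x = g y → h (f x) = h (f y) → x = y) : StrictMonoOnFibers g (h ∘ f) :=
  fun _ _ hxy hg => (hh (hf hxy hg).le).lt_of_ne fun he => hxy.ne (hinj _ _ hg he)

end StrictMonoOnFibers

lemma Monotone.eq_of_le_of_le {α β : Type*} [Preorder α] [PartialOrder β] {g : α → β}
    (hg : Monotone g) {x y z : α} (hxy : x ≤ y) (hyz : y ≤ z) (hxz : g x = g z) : g y = g x :=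
  le_antisymm (hxz ▸ hg hyz) (hg hxy)

section Uniqueness

variable {α β : Type*} [LinearOrder α] {g : α → β} {w w' : Equiv.Perm α}

lemma Equiv.Perm.not_inv_lt_inv (hg : ∀ x, g (w x) = g (w' x))
    (hw' : StrictMonoOnFibers g ⇑w'⁻¹) {z : α} (ih : ∀ y < z, w⁻¹ y = w'⁻¹ y) :
    ¬ w⁻¹ z < w'⁻¹ z := by
  intro hlt
  have hgz : g (w' (w⁻¹ z)) = g z := by rw [← hg]; simp
  rcases lt_trichotomy (w' (w⁻¹ z)) z with h | h | h
  · exact h.ne (w⁻¹.injective (by simpa using ih _ h))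
  · exact hlt.ne' (Equiv.Perm.inv_eq_iff_eq.mpr h.symm)
  · have := hw' h hgz.symm
    simp only [Equiv.Perm.coe_inv, Equiv.symm_apply_apply] at this hlt
    exact lt_asymm hlt this

theorem Equiv.Perm.eq_of_apply_mem_same_fiber [WellFoundedLT α] (hg : ∀ x, g (w x) = g (w' x))
    (hw : StrictMonoOnFibers g ⇑w⁻¹) (hw' : StrictMonoOnFibers g ⇑w'⁻¹) : w = w' := by
  suffices w⁻¹ = w'⁻¹ from inv_injective this
  ext1 z
  induction z using WellFoundedLT.induction with
  | _ z ih =>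
    exact le_antisymm (not_lt.mp (Equiv.Perm.not_inv_lt_inv (fun x => (hg x).symm) hw
      fun y hy => (ih y hy).symm)) (not_lt.mp (Equiv.Perm.not_inv_lt_inv hg hw' ih))

end Uniqueness

section Adjacent

variable {r : ℕ} {g g' : Fin r → ℕ}

lemma strictMonoOnFibers_of_adjacent {γ : Type*} [Preorder γ] (hg : Monotone g) {f : Fin r → γ}
    (h : ∀ a b : Fin r, (b : ℕ) = a + 1 → g a = g b → f a < f b) : StrictMonoOnFibers g f := by
  intro x y hxy hgxy
  obtain ⟨n, hn⟩ : ∃ n, (y : ℕ) = x + n + 1 := ⟨y - x - 1, by have : (x : ℕ) < y := hxy; omega⟩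
  induction n generalizing y with
  | zero => exact h x y (by omega) hgxy
  | succ n ih =>
    set y' : Fin r := ⟨x + n + 1, by omega⟩
    have hy' : g y' = g x := hg.eq_of_le_of_le (x := x) (z := y)
      (Fin.le_def.mpr (by simp [y']; omega)) (Fin.le_def.mpr (by simp [y']; omega)) hgxy
    exact (ih (y := y') (Fin.lt_def.mpr (by simp [y'])) hy'.symm rfl).trans
      (h y' y (by simp [y']; omega) (hy'.trans hgxy))

lemma Equiv.Perm.strictMonoOnFibers_of_adjacent {r : ℕ} {g : Fin r → ℕ} (hg : Monotone g)
    {w : Equiv.Perm (Fin r)} (h : ∀ a b : Fin r, (b : ℕ) = a + 1 → g a = g b → w a ≤ w b) :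
    StrictMonoOnFibers g w :=
  _root_.strictMonoOnFibers_of_adjacent hg fun a b hab hg' =>
    (h a b hab hg').lt_of_ne (w.injective.ne (by simp [Fin.ext_iff, hab]))

lemma exists_adjacent_of_apply_mem_same_fiber (hg : Monotone g) (hg' : Monotone g')
    {w : Equiv.Perm (Fin r)} (hw : StrictMonoOnFibers g w) (hwi : StrictMonoOnFibers g' ⇑w⁻¹)
    {x y : Fin r} (hxy : x < y) (hrow : g x = g y) (hcol : g' (w x) = g' (w y)) :
    ∃ a b : Fin r, (b : ℕ) = a + 1 ∧ g a = g b ∧ (w b : ℕ) = w a + 1 ∧ g' (w a) = g' (w b) := by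
  -- `v = w x + 1` lies in the fibre of `w x`, so `w⁻¹ v` lies strictly after `x` in the fibre of
  -- `x`; monotonicity of `w` then forces `w⁻¹ v = x + 1`.
  have hwxy : w x < w y := hw hxy hrow
  set v : Fin r := ⟨w x + 1, by omega⟩
  have hv : w x < v := Fin.lt_def.mpr (by simp [v])
  have hvy : v ≤ w y := Fin.le_def.mpr (by simp [v]; omega)
  have hgv : g' v = g' (w x) := hg'.eq_of_le_of_le hv.le hvy hcol
  have hxv : x < w⁻¹ v := by simpa using hwi hv hgv.symm
  have hvy' : w⁻¹ v ≤ y := by simpa using hwi.le_of_le hvy (hgv.trans hcol)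
  set x₁ : Fin r := ⟨x + 1, by omega⟩
  have hx₁ : x < x₁ := Fin.lt_def.mpr (by simp [x₁])
  have hx₁v : x₁ ≤ w⁻¹ v := Fin.le_def.mpr (by simp [x₁]; omega)
  have hgx₁ : g x₁ = g x := hg.eq_of_le_of_le hx₁.le (hx₁v.trans hvy') hrow
  have hgxv : g (w⁻¹ v) = g x := hg.eq_of_le_of_le hxv.le hvy' hrow
  have hlo : w x < w x₁ := hw hx₁ hgx₁.symm
  have hhi : w x₁ ≤ v := by simpa using hw.le_of_le hx₁v (hgx₁.trans hgxv.symm)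
  have hwx₁ : (w x₁ : ℕ) = w x + 1 := by
    have := Fin.lt_def.mp hlo; have := Fin.le_def.mp hhi; simp only [v] at this; omega
  refine ⟨x, x₁, rfl, hgx₁.symm, hwx₁, ?_⟩
  rw [← hgv, show w x₁ = v from Fin.ext hwx₁]

end Adjacent

lemma sum_eq_sum_filter_add_involution {α M : Type*} [AddCommMonoid M] (s : Finset α)
    (p : α → Prop) [DecidablePred p] {g : α → α} (hg : ∀ x ∈ s, g x ∈ s)
    (hgg : ∀ x, g (g x) = x) (hp : ∀ x ∈ s, p (g x) ↔ ¬p x) (f : α → M) :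
    ∑ x ∈ s, f x = ∑ x ∈ s.filter p, (f x + f (g x)) := by
  rw [Finset.sum_add_distrib, ← Finset.sum_filter_add_sum_filter_not s p f]
  congr 1
  refine Finset.sum_nbij' g g ?_ ?_ ?_ ?_ ?_ <;> simp_all

lemma mul_mul_mem_span_singleton {R H ι : Type*} [CommRing R] [Ring H] [Algebra R H]
    {T : ι → H} (hTspan : Submodule.span R (Set.range T) = ⊤) {x y z : H}
    (h : ∀ i, x * T i * y ∈ R ∙ z) (a : H) : x * a * y ∈ R ∙ z := by
  have hle : Submodule.span R (Set.range T) ≤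
      (R ∙ z).comap (LinearMap.mulLeftRight R (x, y)) :=
    Submodule.span_le.mpr (Set.range_subset_iff.mpr h)
  rw [hTspan] at hle
  exact hle Submodule.mem_top

lemma blockOf_cons (a : ℕ) (c : List ℕ) (x : ℕ) :
    blockOf (a :: c) x = if x < a then 0 else blockOf c (x - a) + 1 := by
  rw [blockOf, blockOf, Finset.card_filter, Finset.card_filter, List.length_cons,
    Finset.sum_range_succ']
  have hsum (i : ℕ) : ((a :: c).take (i + 1 + 1)).sum = a + (c.take (i + 1)).sum := rfl
  by_cases h : x < a
  · rw [if_pos h, if_neg (by simpa using h), add_zero]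
    exact Finset.sum_eq_zero fun i _ => if_neg (by rw [hsum]; omega)
  · rw [if_neg h, if_pos (by simpa using h)]
    exact congrArg (· + 1) (Finset.sum_congr rfl fun i _ => if_congr (by rw [hsum]; omega) rfl rfl)

lemma blockOf_mono (c : List ℕ) : Monotone (blockOf c) := fun _ _ h =>
  Finset.card_le_card fun _ hi => by
    simp only [Finset.mem_filter] at hi ⊢
    exact ⟨hi.1, hi.2.trans h⟩

lemma monotone_blockOf_val (c : List ℕ) (r : ℕ) : Monotone (blockOf c ∘ Fin.val : Fin r → ℕ) :=
  fun _ _ h => blockOf_mono c h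

lemma blockOf_le_length (c : List ℕ) (x : ℕ) : blockOf c x ≤ c.length :=
  (Finset.card_filter_le _ _).trans (Finset.card_range _).le

lemma sum_take_blockOf_le (c : List ℕ) (x : ℕ) : (c.take (blockOf c x)).sum ≤ x := by
  induction c generalizing x with
  | nil => simp
  | cons a c ih =>
    rw [blockOf_cons]
    split_ifs with h
    · simp
    · simp only [List.take_succ_cons, List.sum_cons]
      have := ih (x - a)
      omega

lemma le_blockOf {c : List ℕ} {j x : ℕ} (hj : j ≤ c.length) (hx : (c.take j).sum ≤ x) :
    j ≤ blockOf c x := by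
  induction c generalizing j x with
  | nil => simp_all
  | cons a c ih =>
    rw [blockOf_cons]
    cases j with
    | zero => omega
    | succ j =>
      simp only [List.take_succ_cons, List.sum_cons, List.length_cons] at hx hj
      rw [if_neg (by omega)]
      have := ih (j := j) (x := x - a) (by omega) (by omega)
      omega

def blockPos (c : List ℕ) (x : ℕ) : ℕ := x - (c.take (blockOf c x)).sum

lemma sum_range_sum_eq_sum_blocks {M : Type*} [AddCommMonoid M] (l : List ℕ) (F : ℕ → ℕ → M) :
    ∑ x ∈ Finset.range l.sum, F (blockOf l x) (blockPos l x) =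
      ∑ i ∈ Finset.range l.length, ∑ k ∈ Finset.range (l.getD i 0), F i k := by
  induction l generalizing F with
  | nil => simp
  | cons a l ih =>
    rw [List.sum_cons, Finset.sum_range_add, List.length_cons, Finset.sum_range_succ', add_comm]
    congr 1
    · simpa [blockPos, blockOf_cons, Nat.add_sub_add_left] using ih (fun i k => F (i + 1) k)
    · refine Finset.sum_congr rfl fun x hx => ?_
      have hx : x < a := Finset.mem_range.mp hx
      simp [blockPos, blockOf_cons, hx]

lemma sum_range_countP_lt_smul {M : Type*} [AddCommMonoid M] (l : List ℕ) {n : ℕ}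
    (hn : ∀ p ∈ l, p ≤ n) (g : ℕ → M) :
    ∑ j ∈ Finset.range n, l.countP (fun p => decide (j < p)) • g j =
      ∑ i ∈ Finset.range l.length, ∑ k ∈ Finset.range (l.getD i 0), g k := by
  induction l with
  | nil => simp
  | cons a l ih =>
    have hfilter : (Finset.range n).filter (· < a) = Finset.range a := by
      ext j
      simp only [Finset.mem_filter, Finset.mem_range]
      have := hn a List.mem_cons_self
      omega
    simp only [List.countP_cons, add_smul, Finset.sum_add_distrib, List.length_cons,
      Finset.sum_range_succ', List.getD_cons_succ, List.getD_cons_zero]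
    rw [ih fun p hp => hn p (List.mem_cons_of_mem a hp), ← hfilter, Finset.sum_filter]
    congr 1
    refine Finset.sum_congr rfl fun j _ => ?_
    split_ifs <;> simp_all

lemma sum_sum_range_getD_conjP {M : Type*} [AddCommMonoid M] (l : List ℕ) (g : ℕ → M) :
    ∑ j ∈ Finset.range (conjP l).length, ∑ _k ∈ Finset.range ((conjP l).getD j 0), g j =
      ∑ i ∈ Finset.range l.length, ∑ k ∈ Finset.range (l.getD i 0), g k := by
  rw [← sum_range_countP_lt_smul l (fun p hp => List.le_max_of_le' 0 hp le_rfl) g]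
  simp only [conjP, List.length_map, List.length_range, Finset.sum_const, Finset.card_range]
  refine Finset.sum_congr rfl fun j hj => ?_
  rw [List.getD_eq_getElem _ _ (by simpa using hj)]
  simp

lemma sum_blockOf_conjP {M : Type*} [AddCommMonoid M] (l : List ℕ) (g : ℕ → M) :
    ∑ x ∈ Finset.range (conjP l).sum, g (blockOf (conjP l) x) =
      ∑ x ∈ Finset.range l.sum, g (blockPos l x) := by
  rw [sum_range_sum_eq_sum_blocks (conjP l) fun j _ => g j,
    sum_range_sum_eq_sum_blocks l fun _ k => g k, sum_sum_range_getD_conjP]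

lemma sum_conjP (l : List ℕ) : (conjP l).sum = l.sum := by
  simpa only [Finset.sum_const, Finset.card_range, smul_eq_mul, mul_one]
    using sum_blockOf_conjP l fun _ => (1 : ℕ)

section YoungDiagram

variable {r : ℕ}

lemma blockPos_le_of_strictMonoOnFibers {l : List ℕ} {h : Fin r → ℕ}
    (hh : StrictMonoOnFibers (blockOf l ∘ Fin.val) h) (x : Fin r) : blockPos l x ≤ h x := by
  induction hn : blockPos l x generalizing x with
  | zero => exact Nat.zero_le _
  | succ n ih =>
    have hstart := sum_take_blockOf_le l x
    have hpos : (l.take (blockOf l x)).sum < x := by rw [blockPos] at hn; omega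
    set x' : Fin r := ⟨x - 1, by omega⟩
    have hx' : x' < x := Fin.lt_def.mpr (by simp [x']; omega)
    have hblock : blockOf l x' = blockOf l x :=
      le_antisymm (blockOf_mono l (by simp [x'])) (le_blockOf (blockOf_le_length l x)
        (by simp [x']; omega))
    have hn' : blockPos l x' = n := by rw [blockPos] at hn ⊢; rw [hblock]; simp [x']; omega
    exact (ih x' hn').trans_lt (hh hx' hblock)

theorem blockOf_conjP_apply_eq_blockPos {l : List ℕ} (hr : l.sum = r) {w : Equiv.Perm (Fin r)}
    (hw : StrictMonoOnFibers (blockOf l ∘ Fin.val) fun x => blockOf (conjP l) (w x))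
    (x : Fin r) : blockOf (conjP l) (w x) = blockPos l x := by
  have hsum : ∑ x : Fin r, blockPos l x = ∑ x : Fin r, blockOf (conjP l) (w x) := by
    rw [Equiv.sum_comp w fun z : Fin r => blockOf (conjP l) z,
      Fin.sum_univ_eq_sum_range (fun z => blockOf (conjP l) z),
      Fin.sum_univ_eq_sum_range (blockPos l)]
    simpa only [sum_conjP, hr, id] using (sum_blockOf_conjP l id).symm
  exact ((Finset.sum_eq_sum_iff_of_le fun x _ => blockPos_le_of_strictMonoOnFibers hw x).mp
    hsum x (Finset.mem_univ x)).symm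

theorem eq_of_strictMonoOnFibers {l : List ℕ} (hr : l.sum = r) {w w' : Equiv.Perm (Fin r)}
    (hw : StrictMonoOnFibers (blockOf l ∘ Fin.val) fun x => blockOf (conjP l) (w x))
    (hw' : StrictMonoOnFibers (blockOf l ∘ Fin.val) fun x => blockOf (conjP l) (w' x))
    (hwi : StrictMonoOnFibers (blockOf (conjP l) ∘ Fin.val) ⇑w⁻¹)
    (hwi' : StrictMonoOnFibers (blockOf (conjP l) ∘ Fin.val) ⇑w'⁻¹) : w = w' :=
  Equiv.Perm.eq_of_apply_mem_same_fiber (fun x => by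
    simp only [Function.comp_apply, blockOf_conjP_apply_eq_blockPos hr hw,
      blockOf_conjP_apply_eq_blockPos hr hw']) hwi hwi'

end YoungDiagram

section Length

variable {r : ℕ}

open Equiv

def inversions (w : Perm (Fin r)) : Finset (Fin r × Fin r) :=
  Finset.univ.filter fun p => p.1 < p.2 ∧ w p.2 < w p.1

lemma permLen_eq_card_inversions (w : Perm (Fin r)) : permLen w = (inversions w).card := rfl

lemma mem_inversions {w : Perm (Fin r)} {p : Fin r × Fin r} :
    p ∈ inversions w ↔ p.1 < p.2 ∧ w p.2 < w p.1 := by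
  simp [inversions]

@[simp]
lemma permLen_one : permLen (1 : Perm (Fin r)) = 0 := by
  rw [permLen_eq_card_inversions, Finset.card_eq_zero]
  exact Finset.filter_eq_empty_iff.mpr fun p _ h => lt_asymm h.1 h.2

@[simp]
lemma permLen_inv (w : Perm (Fin r)) : permLen w⁻¹ = permLen w := by
  simp only [permLen_eq_card_inversions]
  refine Finset.card_nbij' (fun p => (w⁻¹ p.2, w⁻¹ p.1)) (fun p => (w p.2, w p.1)) ?_ ?_ ?_ ?_
    <;> intro p hp <;> simp_all [mem_inversions]

lemma permLen_mul_le (u v : Perm (Fin r)) : permLen (v * u) ≤ permLen v + permLen u := by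
  simp only [permLen_eq_card_inversions]
  have hsub : inversions (v * u) ⊆
      ((inversions v).image fun p => (u⁻¹ p.1, u⁻¹ p.2)) ∪ inversions u := by
    rintro ⟨i, j⟩ hp
    rw [mem_inversions] at hp
    simp only [Finset.mem_union, Finset.mem_image, mem_inversions, Prod.exists, Prod.mk.injEq]
    rcases lt_or_gt_of_ne (u.injective.ne hp.1.ne) with h | h
    · exact Or.inl ⟨u i, u j, ⟨h, hp.2⟩, by simp, by simp⟩
    · exact Or.inr ⟨hp.1, h⟩
  exact (Finset.card_le_card hsub).trans
    ((Finset.card_union_le _ _).trans (Nat.add_le_add_right Finset.card_image_le _))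

variable {a b : Fin r}

lemma swap_lt_swap_iff (hab : (b : ℕ) = a + 1) {i j : Fin r} (h : ¬(i = a ∧ j = b))
    (h' : ¬(i = b ∧ j = a)) : swap a b i < swap a b j ↔ i < j := by
  simp only [Fin.lt_def, swap_apply_def]
  simp only [Fin.ext_iff] at h h'
  split_ifs <;> simp only [Fin.ext_iff] at * <;> omega

lemma permLen_mul_swap_of_lt (hab : (b : ℕ) = a + 1) {w : Perm (Fin r)} (hw : w a < w b) :
    permLen (w * swap a b) = permLen w + 1 := by
  have hba : a < b := Fin.lt_def.mpr (by omega)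
  have hreindex : permLen (w * swap a b) =
      (Finset.univ.filter fun p : Fin r × Fin r =>
        swap a b p.1 < swap a b p.2 ∧ w p.2 < w p.1).card := by
    rw [permLen_eq_card_inversions]
    refine Finset.card_nbij' (fun p => (swap a b p.1, swap a b p.2))
      (fun p => (swap a b p.1, swap a b p.2)) ?_ ?_ ?_ ?_ <;> intro p hp <;>
      simp_all [mem_inversions]
  have hset : (Finset.univ.filter fun p : Fin r × Fin r =>
      swap a b p.1 < swap a b p.2 ∧ w p.2 < w p.1) = insert (b, a) (inversions w) := by
    ext ⟨i, j⟩
    simp only [Finset.mem_filter, Finset.mem_univ, true_and, Finset.mem_insert, Prod.mk.injEq,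
      mem_inversions]
    by_cases h₁ : i = a ∧ j = b
    · obtain ⟨rfl, rfl⟩ := h₁
      simp [hba.ne', lt_asymm hba, lt_asymm hw]
    by_cases h₂ : i = b ∧ j = a
    · obtain ⟨rfl, rfl⟩ := h₂
      simp [hba, hw]
    rw [swap_lt_swap_iff hab h₁ h₂]
    tauto
  rw [hreindex, hset, Finset.card_insert_of_notMem, permLen_eq_card_inversions]
  simp [mem_inversions, hba.not_gt]

lemma permLen_swap_mul_of_lt (hab : (b : ℕ) = a + 1) {w : Perm (Fin r)} (hw : w⁻¹ a < w⁻¹ b) :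
    permLen (swap a b * w) = permLen w + 1 := by
  rw [← permLen_inv, mul_inv_rev, swap_inv, permLen_mul_swap_of_lt hab hw, permLen_inv]

lemma permLen_swap (hab : (b : ℕ) = a + 1) : permLen (swap a b) = 1 := by
  simpa using permLen_mul_swap_of_lt (w := 1) hab (Fin.lt_def.mpr (by simp [hab]))

lemma exists_descent {w : Perm (Fin r)} (hw : w ≠ 1) :
    ∃ a b : Fin r, (b : ℕ) = a + 1 ∧ w b < w a := by
  by_contra! h
  have hmono : StrictMono w := fun x y hxy =>
    Perm.strictMonoOnFibers_of_adjacent (g := fun _ => 0) monotone_const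
      (fun a b hab _ => h a b hab) hxy rfl
  refine hw (Equiv.ext fun x => ?_)
  simpa using congrArg (· x) (Subsingleton.elim (hmono.orderIsoOfSurjective w w.surjective)
    (OrderIso.refl _))

end Length

section Young

variable {r : ℕ} {c d : List ℕ}

open Equiv

lemma inYoung_iff {w : Perm (Fin r)} :
    inYoung c w ↔ ∀ x : Fin r, blockOf c (w x) = blockOf c x := by
  simp [inYoung, pApp]

lemma inYoung_one : inYoung c (1 : Perm (Fin r)) := inYoung_iff.mpr fun _ => rfl

lemma inYoung_mul {v w : Perm (Fin r)} (hv : inYoung c v) (hw : inYoung c w) :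
    inYoung c (v * w) :=
  inYoung_iff.mpr fun x => by rw [Perm.mul_apply, inYoung_iff.mp hv, inYoung_iff.mp hw]

lemma inYoung_inv {w : Perm (Fin r)} (hw : inYoung c w) : inYoung c w⁻¹ :=
  inYoung_iff.mpr fun x => by simpa using (inYoung_iff.mp hw (w⁻¹ x)).symm

lemma inYoung_swap {a b : Fin r} (h : blockOf c a = blockOf c b) : inYoung c (swap a b) :=
  inYoung_iff.mpr fun x => by
    rcases eq_or_ne x a with rfl | hxa
    · simp [h]
    rcases eq_or_ne x b with rfl | hxb
    · simp [h]
    · rw [swap_apply_of_ne_of_ne hxa hxb]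

lemma exists_descent_of_inYoung {w : Perm (Fin r)} (hw : inYoung c w) (hne : w ≠ 1) :
    ∃ a b : Fin r, (b : ℕ) = a + 1 ∧ blockOf c a = blockOf c b ∧ w b < w a := by
  obtain ⟨a, b, hab, hd⟩ := exists_descent hne
  refine ⟨a, b, hab, le_antisymm (blockOf_mono c (by omega)) ?_, hd⟩
  rw [← inYoung_iff.mp hw a, ← inYoung_iff.mp hw b]
  exact blockOf_mono c hd.le

theorem permLen_mul_of_inYoung {u w : Perm (Fin r)}
    (hu : StrictMonoOnFibers (blockOf c ∘ Fin.val) u) (hw : inYoung c w) :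
    permLen (u * w) = permLen u + permLen w := by
  induction hn : permLen w using Nat.strong_induction_on generalizing w with
  | _ n ih =>
    by_cases hne : w = 1
    · subst hne; simp [← hn]
    obtain ⟨a, b, hab, hblock, hd⟩ := exists_descent_of_inYoung hw hne
    have hlen : permLen w = permLen (w * swap a b) + 1 := by
      simpa [mul_assoc] using permLen_mul_swap_of_lt (w := w * swap a b) hab (by simpa using hd)
    have hblock' : blockOf c (w b) = blockOf c (w a) := by
      rw [inYoung_iff.mp hw, inYoung_iff.mp hw, hblock]
    have hu' : (u * (w * swap a b)) a < (u * (w * swap a b)) b := by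
      simpa using hu hd hblock'
    calc permLen (u * w) = permLen (u * (w * swap a b) * swap a b) := by simp [mul_assoc]
      _ = permLen (u * (w * swap a b)) + 1 := permLen_mul_swap_of_lt hab hu'
      _ = permLen u + n := by
        rw [ih _ (by omega) (inYoung_mul hw (inYoung_swap hblock)) rfl]; omega

variable {w : Perm (Fin r)}

lemma IsDistinguished.strictMonoOnFibers (h : IsDistinguished c d w) :
    StrictMonoOnFibers (blockOf c ∘ Fin.val) w :=
  Perm.strictMonoOnFibers_of_adjacent (monotone_blockOf_val c r) fun a b hab hblock => by
    by_contra! hd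
    have hlen := permLen_mul_swap_of_lt (w := w * swap a b) hab (by simpa using hd)
    rw [mul_assoc, swap_mul_self, mul_one] at hlen
    have := h (swap a b) 1 (inYoung_swap hblock) inYoung_one
    rw [one_mul] at this
    omega

lemma IsDistinguished.strictMonoOnFibers_inv (h : IsDistinguished c d w) :
    StrictMonoOnFibers (blockOf d ∘ Fin.val) ⇑w⁻¹ :=
  Perm.strictMonoOnFibers_of_adjacent (monotone_blockOf_val d r) fun a b hab hblock => by
    by_contra! hd
    have hlen := permLen_swap_mul_of_lt (w := swap a b * w) hab (by simpa using hd)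
    rw [← mul_assoc, swap_mul_self, one_mul] at hlen
    have := h 1 (swap a b) inYoung_one (inYoung_swap hblock)
    rw [mul_one] at this
    omega

lemma eq_of_blockOf_eq_of_young_inter_eq_bot
    (htriv : ∀ τ : Perm (Fin r), inYoung d τ → inYoung c (w⁻¹ * τ * w) → τ = 1) (x y : Fin r)
    (hrow : blockOf c x = blockOf c y) (hcol : blockOf d (w x) = blockOf d (w y)) : x = y := by
  have := htriv (swap (w x) (w y)) (inYoung_swap hcol) <| by
    rw [swap_apply_apply]
    simpa [mul_assoc] using inYoung_swap hrow
  simpa using this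

end Young

lemma Units.val_neg_inv_mul {R : Type*} [Ring R] (q : Rˣ) : (((-q)⁻¹ : Rˣ) : R) * q = -1 := by
  rw [← neg_neg (q : R), ← Units.val_neg, mul_neg, Units.inv_mul]

section Hecke

variable {R H : Type} [CommRing R] [Ring H] [Algebra R H] {r : ℕ}

open Equiv

/-- With Lean's left-acting permutations the paper's rule `T_w T_s = T_{ws}` reads
`T w * T s = T (s * w)`. -/
structure IsHeckeFamily (q : Rˣ) (T : Perm (Fin r) → H) : Prop where
  map_one : T 1 = 1
  mul_swap_of_permLen_succ : ∀ (w : Perm (Fin r)) (a b : Fin r), (b : ℕ) = a + 1 →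
    permLen (swap a b * w) = permLen w + 1 → T w * T (swap a b) = T (swap a b * w)
  mul_swap_of_permLen_lt : ∀ (w : Perm (Fin r)) (a b : Fin r), (b : ℕ) = a + 1 →
    permLen (swap a b * w) < permLen w →
      T w * T (swap a b) = (q : R) • T (swap a b * w) + ((q : R) - 1) • T w

namespace IsHeckeFamily

variable {q : Rˣ} {T : Perm (Fin r) → H} {a b : Fin r}

lemma mul_self_swap (hT : IsHeckeFamily q T) (hab : (b : ℕ) = a + 1) :
    T (swap a b) * T (swap a b) = (q : R) • (1 : H) + ((q : R) - 1) • T (swap a b) := by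
  simpa [hT.map_one] using
    hT.mul_swap_of_permLen_lt (swap a b) a b hab (by simp [permLen_swap hab])

theorem mul_of_permLen_mul (hT : IsHeckeFamily q T) {u v : Perm (Fin r)}
    (h : permLen (v * u) = permLen v + permLen u) : T u * T v = T (v * u) := by
  induction hn : permLen v using Nat.strong_induction_on generalizing v with
  | _ n ih =>
    by_cases hv : v = 1
    · simp [hv, hT.map_one]
    obtain ⟨a, b, hab, hd⟩ := exists_descent (inv_ne_one.mpr hv)
    obtain ⟨v', rfl⟩ : ∃ v', v = swap a b * v' := ⟨swap a b * v, by simp [← mul_assoc]⟩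
    have hlen : permLen (swap a b * v') = permLen v' + 1 :=
      permLen_swap_mul_of_lt hab (by simpa using hd)
    have hlen' : permLen (v' * u) = permLen v' + permLen u := by
      have h₁ := permLen_mul_le u v'
      have h₂ := permLen_mul_le (v' * u) (swap a b)
      rw [permLen_swap hab, ← mul_assoc] at h₂
      omega
    rw [← hT.mul_swap_of_permLen_succ v' a b hab hlen, ← mul_assoc, ih _ (by omega) hlen' rfl,
      hT.mul_swap_of_permLen_succ _ a b hab (by rw [← mul_assoc]; omega), mul_assoc]

lemma swap_mul_of_lt (hT : IsHeckeFamily q T) (hab : (b : ℕ) = a + 1) {w : Perm (Fin r)}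
    (hw : w a < w b) : T (swap a b) * T w = T (w * swap a b) :=
  hT.mul_of_permLen_mul (by rw [permLen_mul_swap_of_lt hab hw, permLen_swap hab])

lemma xEl_mul_swap (hT : IsHeckeFamily q T) {c : List ℕ} (hab : (b : ℕ) = a + 1)
    (hblock : blockOf c a = blockOf c b) : xEl T c * T (swap a b) = (q : R) • xEl T c := by
  have hne (w : Perm (Fin r)) : w⁻¹ a ≠ w⁻¹ b := w⁻¹.injective.ne (by simp [Fin.ext_iff, hab])
  rw [xEl, sum_eq_sum_filter_add_involution _ (fun w => w⁻¹ a < w⁻¹ b) (g := (swap a b * ·))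
    (fun w hw => by simpa using inYoung_mul (inYoung_swap hblock) (Finset.mem_filter.mp hw).2)
    (fun w => by simp [← mul_assoc])
    (fun w _ => by simpa using ⟨le_of_lt, fun h => h.lt_of_ne (hne w).symm⟩)]
  rw [Finset.sum_mul, Finset.smul_sum]
  refine Finset.sum_congr rfl fun w hw => ?_
  have hlt : w⁻¹ a < w⁻¹ b := (Finset.mem_filter.mp hw).2
  have hlen := permLen_swap_mul_of_lt hab hlt
  rw [add_mul, hT.mul_swap_of_permLen_succ w a b hab hlen,
    hT.mul_swap_of_permLen_lt _ a b hab (by simp [← mul_assoc, hlen]), ← mul_assoc, swap_mul_self,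
    one_mul]
  module

lemma yEl_eq_mul (hT : IsHeckeFamily q T) {c : List ℕ} (hab : (b : ℕ) = a + 1)
    (hblock : blockOf c a = blockOf c b) :
    yEl q T c = (1 + (((-q)⁻¹ : Rˣ) : R) • T (swap a b)) *
      ∑ w ∈ Finset.univ.filter (fun w => inYoung c w ∧ w a < w b),
        (((-q)⁻¹ : Rˣ) : R) ^ permLen w • T w := by
  have hne (w : Perm (Fin r)) : w a ≠ w b := w.injective.ne (by simp [Fin.ext_iff, hab])
  rw [yEl, sum_eq_sum_filter_add_involution _ (fun w => w a < w b) (g := (· * swap a b))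
    (fun w hw => by simpa using inYoung_mul (Finset.mem_filter.mp hw).2 (inYoung_swap hblock))
    (fun w => by simp [mul_assoc])
    (fun w _ => by simpa using ⟨le_of_lt, fun h => h.lt_of_ne (hne w).symm⟩),
    Finset.filter_filter, Finset.mul_sum]
  refine Finset.sum_congr rfl fun w hw => ?_
  have hlt : w a < w b := (Finset.mem_filter.mp hw).2.2
  rw [permLen_mul_swap_of_lt hab hlt, ← hT.swap_mul_of_lt hab hlt, add_mul, one_mul,
    smul_mul_assoc, mul_smul_comm, smul_smul, pow_succ']

lemma swap_mul_yEl (hT : IsHeckeFamily q T) {c : List ℕ} (hab : (b : ℕ) = a + 1)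
    (hblock : blockOf c a = blockOf c b) : T (swap a b) * yEl q T c = -yEl q T c := by
  have hfactor : T (swap a b) * (1 + (((-q)⁻¹ : Rˣ) : R) • T (swap a b)) =
      -(1 + (((-q)⁻¹ : Rˣ) : R) • T (swap a b)) := by
    rw [mul_add, mul_one, mul_smul_comm, hT.mul_self_swap hab, smul_add, smul_smul, smul_smul,
      mul_sub, Units.val_neg_inv_mul, mul_one]
    module
  rw [hT.yEl_eq_mul hab hblock, ← mul_assoc, hfactor, neg_mul]

lemma xEl_mul_of_descent (hT : IsHeckeFamily q T) {c : List ℕ} (hab : (b : ℕ) = a + 1)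
    (hblock : blockOf c a = blockOf c b) {w : Perm (Fin r)} (hd : w b < w a) :
    xEl T c * T w = (q : R) • (xEl T c * T (w * swap a b)) := by
  have hw : T (swap a b) * T (w * swap a b) = T w := by
    rw [hT.swap_mul_of_lt hab (by simpa using hd), mul_assoc, swap_mul_self, mul_one]
  rw [← hw, ← mul_assoc, hT.xEl_mul_swap hab hblock, smul_mul_assoc]

lemma mul_yEl_of_descent (hT : IsHeckeFamily q T) {c : List ℕ} (hab : (b : ℕ) = a + 1)
    (hblock : blockOf c a = blockOf c b) {w : Perm (Fin r)} (hd : w⁻¹ b < w⁻¹ a) :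
    T w * yEl q T c = -(T (swap a b * w) * yEl q T c) := by
  have hw : T (swap a b * w) * T (swap a b) = T w := by
    rw [hT.mul_swap_of_permLen_succ _ a b hab (permLen_swap_mul_of_lt hab (by simpa using hd)),
      ← mul_assoc, swap_mul_self, one_mul]
  rw [← hw, mul_assoc, hT.swap_mul_yEl hab hblock, mul_neg]

theorem xEl_mul_mul_yEl_eq_zero (hT : IsHeckeFamily q T) {l m : List ℕ} {w : Perm (Fin r)}
    (hab : (b : ℕ) = a + 1) (hrow : blockOf l a = blockOf l b) (hw : (w b : ℕ) = w a + 1)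
    (hcol : blockOf m (w a) = blockOf m (w b)) : xEl T l * T w * yEl q T m = 0 := by
  -- `T_s T_w = T_w T_t` for `t = w s w⁻¹`, so `x_λ T_w (1 - q⁻¹ T_t) = (1 - q⁻¹ q) x_λ T_w`.
  have hlt : w a < w b := Fin.lt_def.mpr (by omega)
  have hcomm : T w * T (swap (w a) (w b)) = T (swap a b) * T w := by
    rw [hT.swap_mul_of_lt hab hlt, hT.mul_swap_of_permLen_succ w _ _ hw
      (permLen_swap_mul_of_lt hw (by simpa using Fin.lt_def.mpr (by omega))), swap_apply_apply]
    simp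
  rw [hT.yEl_eq_mul hw hcol, ← mul_assoc, mul_add, mul_one, mul_smul_comm, mul_assoc, hcomm,
    ← mul_assoc, hT.xEl_mul_swap hab hrow, smul_mul_assoc, smul_smul, Units.val_neg_inv_mul]
  simp

theorem xEl_mul_mul_yEl_eq_zero_of_not_strictMonoOnFibers (hT : IsHeckeFamily q T)
    {l m : List ℕ} {w : Perm (Fin r)} (hw : StrictMonoOnFibers (blockOf l ∘ Fin.val) w)
    (hwi : StrictMonoOnFibers (blockOf m ∘ Fin.val) ⇑w⁻¹)
    (hcol : ¬StrictMonoOnFibers (blockOf l ∘ Fin.val) fun x => blockOf m (w x)) :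
    xEl T l * T w * yEl q T m = 0 := by
  simp only [StrictMonoOnFibers, not_forall, not_lt] at hcol
  obtain ⟨x, y, hxy, hrow, hle⟩ := hcol
  obtain ⟨a, b, hab, hrow', hwab, hcol'⟩ := exists_adjacent_of_apply_mem_same_fiber
    (monotone_blockOf_val l r) (monotone_blockOf_val m r) hw hwi hxy hrow
    (le_antisymm (blockOf_mono m (hw hxy hrow).le) hle)
  exact hT.xEl_mul_mul_yEl_eq_zero hab hrow' hwab hcol'

theorem xEl_mul_mul_yEl_mem_span (hT : IsHeckeFamily q T) {l : List ℕ} (hr : l.sum = r)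
    {wl : Perm (Fin r)}
    (hwl : StrictMonoOnFibers (blockOf l ∘ Fin.val) fun x => blockOf (conjP l) (wl x))
    (hwli : StrictMonoOnFibers (blockOf (conjP l) ∘ Fin.val) ⇑wl⁻¹) (w : Perm (Fin r)) :
    xEl T l * T w * yEl q T (conjP l) ∈ R ∙ (xEl T l * T wl * yEl q T (conjP l)) := by
  induction hn : permLen w using Nat.strong_induction_on generalizing w with
  | _ n ih =>
    by_cases hrow : ∃ a b : Fin r, (b : ℕ) = a + 1 ∧ blockOf l a = blockOf l b ∧ w b < w a
    · obtain ⟨a, b, hab, hblock, hd⟩ := hrow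
      have hlen := permLen_mul_swap_of_lt (w := w * swap a b) hab (by simpa using hd)
      rw [mul_assoc, swap_mul_self, mul_one] at hlen
      rw [hT.xEl_mul_of_descent hab hblock hd, smul_mul_assoc]
      exact Submodule.smul_mem _ _ (ih _ (by omega) _ rfl)
    by_cases hcol : ∃ a b : Fin r, (b : ℕ) = a + 1 ∧
        blockOf (conjP l) a = blockOf (conjP l) b ∧ w⁻¹ b < w⁻¹ a
    · obtain ⟨a, b, hab, hblock, hd⟩ := hcol
      have hlen := permLen_swap_mul_of_lt (w := swap a b * w) hab (by simpa using hd)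
      rw [← mul_assoc, swap_mul_self, one_mul] at hlen
      have hneg : xEl T l * T w * yEl q T (conjP l) =
          -(xEl T l * T (swap a b * w) * yEl q T (conjP l)) := by
        rw [mul_assoc, hT.mul_yEl_of_descent hab hblock hd, mul_neg, ← mul_assoc]
      rw [hneg]
      exact Submodule.neg_mem _ (ih _ (by omega) _ rfl)
    push Not at hrow hcol
    have hw := Perm.strictMonoOnFibers_of_adjacent (monotone_blockOf_val l r) hrow
    have hwi := Perm.strictMonoOnFibers_of_adjacent (monotone_blockOf_val (conjP l) r) hcol
    by_cases hrowcol : StrictMonoOnFibers (blockOf l ∘ Fin.val) fun x => blockOf (conjP l) (w x)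
    · rw [eq_of_strictMonoOnFibers hr hrowcol hwl hwi hwli]
      exact Submodule.mem_span_singleton_self _
    · rw [hT.xEl_mul_mul_yEl_eq_zero_of_not_strictMonoOnFibers hw hwi hrowcol]
      exact Submodule.zero_mem _

lemma mul_mul_of_inYoung (hT : IsHeckeFamily q T) {l m : List ℕ} {wl a b : Perm (Fin r)}
    (hrow : StrictMonoOnFibers (blockOf l ∘ Fin.val) wl)
    (hcol : StrictMonoOnFibers (blockOf m ∘ Fin.val) fun z => blockOf l (wl⁻¹ z))
    (ha : inYoung l a) (hb : inYoung m b) : T a * T wl * T b = T (b * wl * a) := by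
  -- `a⁻¹` preserves rows, and rows strictly increase along `wl⁻¹` of a column, so `a⁻¹ * wl⁻¹`
  -- is still increasing on columns.
  have hcol' : StrictMonoOnFibers (blockOf m ∘ Fin.val) ⇑(wl * a)⁻¹ := fun x y hxy hxy' => by
    have : blockOf l (wl⁻¹ x) < blockOf l (wl⁻¹ y) := hcol hxy hxy'
    rw [← inYoung_iff.mp (inYoung_inv ha) (wl⁻¹ x), ← inYoung_iff.mp (inYoung_inv ha) (wl⁻¹ y)]
      at this
    simpa using lt_of_not_ge fun h => this.not_ge (blockOf_mono l h)
  have hlen : permLen (b * (wl * a)) = permLen b + permLen (wl * a) := by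
    rw [← permLen_inv, mul_inv_rev, permLen_mul_of_inYoung hcol' (inYoung_inv hb), permLen_inv,
      permLen_inv, add_comm]
  rw [hT.mul_of_permLen_mul (permLen_mul_of_inYoung hrow ha), hT.mul_of_permLen_mul hlen,
    mul_assoc]

theorem eq_zero_of_smul_xEl_mul_mul_yEl_eq_zero (hT : IsHeckeFamily q T)
    (hTind : LinearIndependent R T) {l m : List ℕ} {wl : Perm (Fin r)}
    (hrow : StrictMonoOnFibers (blockOf l ∘ Fin.val) wl)
    (hcol : StrictMonoOnFibers (blockOf m ∘ Fin.val) fun z => blockOf l (wl⁻¹ z))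
    (htriv : ∀ τ : Perm (Fin r), inYoung m τ → inYoung l (wl⁻¹ * τ * wl) → τ = 1) {c : R}
    (hc : c • (xEl T l * T wl * yEl q T m) = 0) : c = 0 := by
  set S := (Finset.univ.filter fun a => inYoung l a) ×ˢ (Finset.univ.filter fun b => inYoung m b)
  have h1 : ((1 : Perm (Fin r)), (1 : Perm (Fin r))) ∈ S := by simp [S, inYoung_one]
  have hexp : xEl T l * T wl * yEl q T m =
      ∑ p ∈ S, (((-q)⁻¹ : Rˣ) : R) ^ permLen p.2 • T (p.2 * wl * p.1) := by
    rw [xEl, yEl, Finset.sum_mul, Finset.sum_mul, Finset.sum_product]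
    refine Finset.sum_congr rfl fun a ha => ?_
    rw [Finset.mul_sum]
    refine Finset.sum_congr rfl fun b hb => ?_
    rw [mul_smul_comm, hT.mul_mul_of_inYoung hrow hcol (Finset.mem_filter.mp ha).2
      (Finset.mem_filter.mp hb).2]
  have hrest : ∑ p ∈ S.erase (1, 1), (((-q)⁻¹ : Rˣ) : R) ^ permLen p.2 • T (p.2 * wl * p.1) ∈
      Submodule.span R (T '' (Set.univ \ {wl})) := by
    refine Submodule.sum_mem _ fun ⟨a, b⟩ hp => Submodule.smul_mem _ _ (Submodule.subset_span ?_)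
    obtain ⟨hp1, hp⟩ := Finset.mem_erase.mp hp
    simp only [S, Finset.mem_product, Finset.mem_filter, Finset.mem_univ, true_and] at hp
    refine ⟨_, ⟨trivial, fun h => hp1 ?_⟩, rfl⟩
    rw [Set.mem_singleton_iff] at h
    obtain rfl : b = 1 := htriv _ hp.2 <| by
      rw [show wl⁻¹ * b * wl = a⁻¹ by
        calc wl⁻¹ * b * wl = wl⁻¹ * (b * wl * a) * a⁻¹ := by group
          _ = a⁻¹ := by rw [h]; group]
      exact inYoung_inv hp.1
    rw [one_mul, mul_eq_left] at h
    exact Prod.ext h rfl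
  rw [hexp, ← Finset.add_sum_erase S _ h1, smul_add, add_eq_zero_iff_eq_neg] at hc
  simp only [permLen_one, pow_zero, one_smul, one_mul, mul_one] at hc
  refine hTind.eq_zero_of_smul_mem_span wl c ?_
  rw [hc]
  exact Submodule.neg_mem _ (Submodule.smul_mem _ c hrest)

end IsHeckeFamily

end Hecke

/-- Dipper–James: in the Hecke algebra of type `A_{r-1}`,
`x_λ H y_{λ'}` is a free `R`-module of rank 1 generated by
`z_λ = x_λ T_{w_λ} y_{λ'}`.  The Hecke algebra is presented through its
standard basis `T` indexed by permutations together with the multiplication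
rules for a simple reflection. -/
theorem stmt10 (R : Type) [CommRing R] (H : Type) [Ring H] [Algebra R H]
    (r : ℕ) (q : Rˣ) (T : Equiv.Perm (Fin r) → H)
    (hT1 : T 1 = 1)
    (hTmul : ∀ (w : Equiv.Perm (Fin r)) (i : ℕ) (h : i + 1 < r),
      (permLen (Equiv.swap (⟨i, by omega⟩ : Fin r) ⟨i + 1, h⟩ * w) = permLen w + 1 →
        T w * T (Equiv.swap (⟨i, by omega⟩ : Fin r) ⟨i + 1, h⟩) =
          T (Equiv.swap (⟨i, by omega⟩ : Fin r) ⟨i + 1, h⟩ * w)) ∧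
      (permLen (Equiv.swap (⟨i, by omega⟩ : Fin r) ⟨i + 1, h⟩ * w) < permLen w →
        T w * T (Equiv.swap (⟨i, by omega⟩ : Fin r) ⟨i + 1, h⟩) =
          (q : R) • T (Equiv.swap (⟨i, by omega⟩ : Fin r) ⟨i + 1, h⟩ * w)
            + ((q : R) - 1) • T w))
    (hTind : LinearIndependent R T)
    (hTspan : Submodule.span R (Set.range T) = ⊤)
    (l : List ℕ) (hsum : l.sum = r)
    (wl : Equiv.Perm (Fin r))
    (hdist : IsDistinguished l (conjP l) wl)
    (htriv : ∀ τ : Equiv.Perm (Fin r), inYoung (conjP l) τ →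
      inYoung l (wl⁻¹ * τ * wl) → τ = 1) :
    (∀ h : H, ∃ c : R,
      xEl T l * h * yEl q T (conjP l) =
        c • (xEl T l * T wl * yEl q T (conjP l))) ∧
    (∀ c : R, c • (xEl T l * T wl * yEl q T (conjP l)) = 0 → c = 0) := by
  have hT : IsHeckeFamily q T :=
    { map_one := hT1
      mul_swap_of_permLen_succ := fun w ⟨a, _⟩ ⟨b, hb⟩ hab => by
        subst hab; exact (hTmul w a hb).1
      mul_swap_of_permLen_lt := fun w ⟨a, _⟩ ⟨b, hb⟩ hab => by
        subst hab; exact (hTmul w a hb).2 }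
  have hinj := eq_of_blockOf_eq_of_young_inter_eq_bot htriv
  have hrow := hdist.strictMonoOnFibers.comp_of_injOn_fibers (monotone_blockOf_val _ r) hinj
  have hcol := hdist.strictMonoOnFibers_inv.comp_of_injOn_fibers (monotone_blockOf_val l r)
    fun z z' hz hz' => wl⁻¹.injective (hinj _ _ hz' (by simpa using hz))
  refine ⟨fun h => ?_, fun c => hT.eq_zero_of_smul_xEl_mul_mul_yEl_eq_zero hTind
    hdist.strictMonoOnFibers hcol htriv⟩
  obtain ⟨c, hc⟩ := Submodule.mem_span_singleton.mp <| mul_mul_mem_span_singleton hTspan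
    (hT.xEl_mul_mul_yEl_mem_span hsum hrow hdist.strictMonoOnFibers_inv) h
  exact ⟨c, hc.symm⟩
end
end

section
/- (Separation of residues) Let R be a field with q ≠ 0, l the smallest positive integer with 1 + q + ⋯ + q^{l-1} = 0 (l ≤ r), and suppose f_{m,r} = Π_{1≤i<j≤m} Π_{k=1-r}^{r-1} (u_i q^k - u_j) ≠ 0. If n = (i,j)_k and n' = (i',j')_{k'} are nodes of the Young diagram of an m-partition λ of r with equal residues res(n) = q^{j-i}u_k and res(n') = q^{j'-i'}u_{k'} (in the case q ≠ 1), then k = k', i.e. the two nodes lie in the same component λ^(k). -/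
noncomputable section
open scoped Classical
open Finset

/-- The residue `q^{j-i} u_k` of the node `(k,i,j)` (0-indexed `k`, so the
parameter is `u (k+1)`); for nodes the difference `j - i` is unchanged by the
0-indexing shift. -/
def resN {R : Type} [Field R] (q : R) (u : ℕ → R) (p : ℕ × ℕ × ℕ) : R :=
  q ^ ((p.2.2 : ℤ) - (p.2.1 : ℤ)) * u (p.1 + 1)

/-- `f_{m,r} = Π_{1 ≤ i < j ≤ m} Π_{k=1-r}^{r-1} (u_i q^k - u_j)`. -/
def fProd {R : Type} [Field R] (q : R) (u : ℕ → R) (m r : ℕ) : R :=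
  ∏ p ∈ (Finset.Icc 1 m ×ˢ Finset.Icc 1 m).filter (fun p => p.1 < p.2),
    ∏ k ∈ Finset.Icc (1 - (r : ℤ)) ((r : ℤ) - 1), (u p.1 * q ^ k - u p.2)

/-!
A node `(i, j)` of a partition of `s` satisfies `i + j + 1 ≤ s`: rows `0, …, i - 1` are nonempty
and row `i` has more than `j` boxes. For nodes in two different components `a < b` of an
`m`-partition of `r` the two component sizes add up to at most `r`, so the difference `d` of the
contents `j - i` satisfies `|d| ≤ r - 1`. Equal residues would then give `u_a q^d = u_b`, a vanishing
factor of `f_{m,r}`.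
-/

namespace List

theorem add_add_one_le_sum_of_lt_getD {x : List ℕ} (hpos : ∀ a ∈ x, 0 < a) {i j : ℕ}
    (h : j < x.getD i 0) : i + j + 1 ≤ x.sum := by
  induction x generalizing i with
  | nil => simp at h
  | cons a t ih =>
    have ha := hpos a mem_cons_self
    cases i with
    | zero => simp only [getD_cons_zero] at h; simp only [sum_cons]; omega
    | succ i =>
      have := ih (fun b hb => hpos b (mem_cons_of_mem a hb)) (by simpa using h)
      simp only [sum_cons]; omega

theorem getD_le_sum {M : Type*} [AddCommMonoid M] [PartialOrder M] [CanonicallyOrderedAdd M]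
    (l : List M) (i : ℕ) : l.getD i 0 ≤ l.sum := by
  rw [getD_eq_getElem?_getD]
  cases h : l[i]? with
  | none => exact zero_le
  | some a => exact le_sum_of_mem (mem_of_getElem? h)

theorem getD_add_getD_le_sum {M : Type*} [AddCommMonoid M] [PartialOrder M]
    [CanonicallyOrderedAdd M] [AddLeftMono M] (l : List M) {a b : ℕ} (hab : a < b) :
    l.getD a 0 + l.getD b 0 ≤ l.sum := by
  induction l generalizing a b with
  | nil => simp
  | cons c t ih =>
    obtain ⟨b, rfl⟩ := Nat.exists_eq_add_of_lt hab
    cases a with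
    | zero => simpa using add_le_add_right (t.getD_le_sum b) c
    | succ a =>
      simpa [Nat.add_right_comm a] using
        (ih (by omega : a < a + b + 1)).trans (le_add_self : t.sum ≤ c + t.sum)

end List

theorem lt_length_of_mpMem {L : List (List ℕ)} {p : ℕ × ℕ × ℕ} (hp : mpMem L p) :
    p.1 < L.length := by
  by_contra h
  rw [mpMem, part, List.getD_eq_default _ _ (not_lt.mp h)] at hp
  simp at hp

theorem add_add_one_le_of_mpMem {L : List (List ℕ)} (hparts : ∀ x ∈ L, IsPartition x)
    {p : ℕ × ℕ × ℕ} (hp : mpMem L p) : p.2.1 + p.2.2 + 1 ≤ (L.getD p.1 []).sum := by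
  have hmem : L.getD p.1 [] ∈ L := by
    rw [List.getD_eq_getElem _ _ (lt_length_of_mpMem hp)]
    exact List.getElem_mem _
  exact List.add_add_one_le_sum_of_lt_getD (hparts _ hmem).2 hp

theorem sum_getD_add_sum_getD_le (L : List (List ℕ)) {k k' : ℕ} (h : k < k') :
    (L.getD k []).sum + (L.getD k' []).sum ≤ L.flatten.sum := by
  have hsum := (L.map List.sum).getD_add_getD_le_sum h
  rwa [← List.sum_nil, List.getD_map, List.getD_map, ← List.sum_flatten] at hsum

theorem mul_zpow_ne_of_fProd_ne_zero {R : Type} [Field R] {q : R} {u : ℕ → R} {m r : ℕ}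
    (hf : fProd q u m r ≠ 0) {a b : ℕ} (ha : 1 ≤ a) (hab : a < b) (hb : b ≤ m) {k : ℤ}
    (hk₁ : 1 - (r : ℤ) ≤ k) (hk₂ : k ≤ (r : ℤ) - 1) : u a * q ^ k ≠ u b := by
  have hpair : (a, b) ∈ (Icc 1 m ×ˢ Icc 1 m).filter (fun x => x.1 < x.2) := by
    simp only [mem_filter, mem_product, mem_Icc]
    omega
  rw [fProd, prod_ne_zero_iff] at hf
  exact sub_ne_zero.mp (prod_ne_zero_iff.mp (hf _ hpair) k (mem_Icc.mpr ⟨hk₁, hk₂⟩))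

theorem resN_ne_of_lt {R : Type} [Field R] {q : R} (hq0 : q ≠ 0) {u : ℕ → R} {r : ℕ}
    {Lp : List (List ℕ)} (hf : fProd q u Lp.length r ≠ 0)
    (hparts : ∀ x ∈ Lp, IsPartition x) (hsum : Lp.flatten.sum = r)
    {p p' : ℕ × ℕ × ℕ} (hp : mpMem Lp p) (hp' : mpMem Lp p') (hlt : p.1 < p'.1) :
    resN q u p ≠ resN q u p' := by
  have hsize := sum_getD_add_sum_getD_le Lp hlt
  have hnode := add_add_one_le_of_mpMem hparts hp
  have hnode' := add_add_one_le_of_mpMem hparts hp'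
  have hne := mul_zpow_ne_of_fProd_ne_zero hf (Nat.succ_pos p.1) (Nat.succ_lt_succ hlt)
    (lt_length_of_mpMem hp') (k := ((p.2.2 : ℤ) - p.2.1) - ((p'.2.2 : ℤ) - p'.2.1))
    (by omega) (by omega)
  intro hres
  apply hne
  rw [zpow_sub₀ hq0]
  have hz : q ^ ((p'.2.2 : ℤ) - p'.2.1) ≠ 0 := zpow_ne_zero _ hq0
  field_simp
  simp only [resN] at hres
  linear_combination hres

theorem stmt17_general (R : Type) [Field R] (q : R) (hq0 : q ≠ 0)
    (u : ℕ → R) (m r : ℕ)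
    (hf : fProd q u m r ≠ 0)
    (Lp : List (List ℕ)) (hparts : ∀ x ∈ Lp, IsPartition x)
    (hlen : Lp.length = m) (hsum : Lp.flatten.sum = r)
    (p p' : ℕ × ℕ × ℕ) (hp : mpMem Lp p) (hp' : mpMem Lp p')
    (hres : resN q u p = resN q u p') :
    p.1 = p'.1 := by
  subst hlen
  rcases lt_trichotomy p.1 p'.1 with h | h | h
  · exact absurd hres (resN_ne_of_lt hq0 hf hparts hsum hp hp' h)
  · exact h
  · exact absurd hres.symm (resN_ne_of_lt hq0 hf hparts hsum hp' hp h)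

/-- separation of residues, (4.6) first part: if `f_{m,r} ≠ 0`,
two nodes of the Young diagram of an `m`-partition of `r` with equal residues
lie in the same component. -/
theorem stmt17 (R : Type) [Field R] (q : R) (hq0 : q ≠ 0) (hq1 : q ≠ 1)
    (u : ℕ → R) (m r : ℕ)
    (l : ℕ) (hl : 0 < l) (hlr : l ≤ r)
    (hlsum : ∑ t ∈ Finset.range l, q ^ t = 0)
    (hlmin : ∀ l', 0 < l' → l' < l → ∑ t ∈ Finset.range l', q ^ t ≠ 0)
    (hf : fProd q u m r ≠ 0)
    (Lp : List (List ℕ)) (hparts : ∀ x ∈ Lp, IsPartition x)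
    (hlen : Lp.length = m) (hsum : Lp.flatten.sum = r)
    (p p' : ℕ × ℕ × ℕ) (hp : mpMem Lp p) (hp' : mpMem Lp p')
    (hres : resN q u p = resN q u p') :
    p.1 = p'.1 :=
  stmt17_general R q hq0 u m r hf Lp hparts hlen hsum p p' hp hp' hres
end
end
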